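/- arXiv:2306.03587 — 2 statements merged into one kernel-verified Lean document; each statement's English description precedes it below -/
import Mathlib

section
/- Let X ⊂ P^N be an irreducible smooth projective subvariety and F a vector bundle on X with H^i(X, F(-i)) = 0 for 1 ≤ i ≤ n and H^i(X, F(-i-1)) = 0 for 0 ≤ i < n, where n = ⌊dim X / 2⌋. Then the coboundary map ∂ : H^0(X, F) → H^n(X, F ⊗ Ω^n_P|_X) is an isomorphism. -/
/-!
Statement 3.  Same setup as Statement 2: `X ⊂ ℙ^N` an irreducible smooth
projective subvariety, `F` a vector bundle on `X`, `HF i m = H^i(X, F(m))`,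
`HΩ j = H^j(X, F ⊗ Ω^j_ℙ|_X)`, and for each `j` the long exact cohomology
sequence of `0 → F ⊗ Ω^{j+1}_ℙ → F ⊗ ∧^{j+1}W₁^∨ ⊗ O(-j-1) → F ⊗ Ω^j_ℙ → 0`
gives the exact pieces
`(H^j(F(-j-1)))^{b j} → HΩ j → HΩ (j+1) → (H^{j+1}(F(-j-1)))^{b j}`.
With the additional vanishing `H^i(X, F(-i-1)) = 0` for `0 ≤ i < n`, together
with `H^i(X, F(-i)) = 0` for `1 ≤ i ≤ n` (`n = ⌊dim X / 2⌋`), the iterated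
coboundary `∂ : H^0(X, F) → H^n(X, F ⊗ Ω^n_ℙ|_X)` is an isomorphism
(stated as bijectivity).
-/

universe u

/-- The iterated coboundary map `HΩ 0 → HΩ j`, composite of the `δ`'s. -/
def iterCoboundary {k : Type u} [Field k] {HΩ : ℕ → Type u}
    [∀ j, AddCommGroup (HΩ j)] [∀ j, Module k (HΩ j)]
    (δ : ∀ j : ℕ, HΩ j →ₗ[k] HΩ (j + 1)) : ∀ j : ℕ, HΩ 0 →ₗ[k] HΩ j
  | 0 => LinearMap.id
  | j + 1 => (δ j).comp (iterCoboundary δ j)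

theorem stmt3 {k : Type u} [Field k]
    (N dimX n : ℕ) (hdim : dimX ≤ N) (hn : n = dimX / 2)
    (HF : ℕ → ℤ → Type u)
    [∀ i m, AddCommGroup (HF i m)] [∀ i m, Module k (HF i m)]
    (HΩ : ℕ → Type u)
    [∀ j, AddCommGroup (HΩ j)] [∀ j, Module k (HΩ j)]
    (b : ℕ → ℕ)
    (e0 : HF 0 0 ≃ₗ[k] HΩ 0)
    (δ : ∀ j : ℕ, HΩ j →ₗ[k] HΩ (j + 1))
    (ι : ∀ j : ℕ, (Fin (b j) → HF j (-(j + 1 : ℤ))) →ₗ[k] HΩ j)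
    (π : ∀ j : ℕ, HΩ (j + 1) →ₗ[k] (Fin (b j) → HF (j + 1) (-(j + 1 : ℤ))))
    (hexact₁ : ∀ j : ℕ, Function.Exact (ι j) (δ j))
    (hexact₂ : ∀ j : ℕ, Function.Exact (δ j) (π j))
    (hvan : ∀ i : ℕ, 1 ≤ i → i ≤ n → Subsingleton (HF i (-(i : ℤ))))
    (hvan' : ∀ i : ℕ, i < n → Subsingleton (HF i (-(i + 1 : ℤ)))) :
    Function.Bijective
      ((iterCoboundary δ n).comp (e0 : HF 0 0 →ₗ[k] HΩ 0)) := by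
  have hδ : ∀ j, j < n → Function.Bijective (δ j) := by
    intro j hj
    constructor
    · rw [injective_iff_map_eq_zero]
      intro x hx
      obtain ⟨y, hy⟩ := (hexact₁ j x).mp hx
      haveI : Subsingleton (HF j (-(j + 1 : ℤ))) := hvan' j hj
      rw [Subsingleton.elim y 0, map_zero] at hy
      exact hy.symm
    · intro x
      haveI : Subsingleton (HF (j + 1) (-(j + 1 : ℤ))) := by
        have h := hvan (j + 1) (by omega) (by omega)
        rwa [show (((j + 1 : ℕ) : ℤ)) = (j : ℤ) + 1 by push_cast; ring] at h
      exact (hexact₂ j x).mp (Subsingleton.elim _ _)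
  have hiter : ∀ j, j ≤ n → Function.Bijective (iterCoboundary δ j) := by
    intro j
    induction j with
    | zero => intro _; exact Function.bijective_id
    | succ j ih =>
      intro h
      have : Function.Bijective (⇑(δ j) ∘ ⇑(iterCoboundary δ j)) :=
        (hδ j (by omega)).comp (ih (by omega))
      simpa [iterCoboundary, LinearMap.coe_comp] using this
  have := (hiter n le_rfl).comp e0.bijective
  simpa [LinearMap.coe_comp] using this
end

section
/- Let X ⊂ P^N be a smooth projective variety with dim X = p + q, and E a vector bundle on X with H^0(X, E) ≠ 0. Suppose in the commutative diagram relating the evaluation pairing H^0(E) × H^0(E^∨) → H^0(O_X), the coboundary pairing H^p(E ⊗ Ω^p_P|_X) × H^q(E^∨ ⊗ Ω^q_P|_X) → H^{p+q}(Ω^{p+q}_P|_X), and the Serre duality pairing H^p(E ⊗ Ω^p_X) × H^q(E^∨ ⊗ Ω^q_X) → H^{dim X}(ω_X), that the coboundary map ∂_1 : H^0(E) → H^p(E ⊗ Ω^p_P|_X) and the restriction map ρ_1 : H^p(E ⊗ Ω^p_P|_X) → H^p(E ⊗ Ω^p_X) are injective, while ∂_2 : H^0(E^∨) → H^q(E^∨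 ⊗ Ω^q_P|_X) and ρ_2 : H^q(E^∨ ⊗ Ω^q_P|_X) → H^q(E^∨ ⊗ Ω^q_X) are surjective. Then the pairing H^0(E) × H^0(E^∨) → H^0(O_X) is nonzero, and consequently O_X is a direct summand of E. -/
/-!
Statement 7 (splitting criterion).  `C` is the abelian category of coherent
sheaves on the smooth projective variety `X ⊂ ℙ^N` with `dim X = p + q`, `OX`
the structure sheaf and `E` a vector bundle; `H⁰(E) = Hom(OX, E)`,
`H⁰(E^∨) = Hom(E, OX)`, and the evaluation pairing is composition.  The
cohomology spaces are `HPp = H^p(E ⊗ Ω^p_ℙ|_X)`, `HPq = H^q(E^∨ ⊗ Ω^q_ℙ|_X)`,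
`Hp = H^p(E ⊗ Ω^p_X)`, `Hq = H^q(E^∨ ⊗ Ω^q_X)`; `δ₁, δ₂` are the Koszul
(Euler-sequence) coboundary maps, `ρ₁, ρ₂` the restriction maps, and
`φ₂ : Hp × Hq → H^{dim X}(ω_X) = k` is the Serre duality pairing (perfect).
The commutativity of the diagram is encoded by `hcomm`.  If `H⁰(E) ≠ 0`,
`δ₁, ρ₁` are injective and `δ₂, ρ₂` are surjective, then the pairing
`H⁰(E) × H⁰(E^∨) → H⁰(O_X)` is nonzero and `O_X` is a direct summand of `E`.
-/

open CategoryTheory CategoryTheory.Limits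

universe u v w

theorem stmt7 {k : Type w} [Field k] {C : Type u} [Category.{v} C] [Abelian C]
    (OX E : C) (N dimX p q : ℕ) (hdim : dimX = p + q) (hN : dimX ≤ N)
    (Hp Hq HPp HPq : Type w)
    [AddCommGroup Hp] [Module k Hp] [AddCommGroup Hq] [Module k Hq]
    [AddCommGroup HPp] [Module k HPp] [AddCommGroup HPq] [Module k HPq]
    (hOX : ∀ f : OX ⟶ OX, f ≠ 0 → IsIso f)
    (h0 : ∃ s : OX ⟶ E, s ≠ 0)
    (δ₁ : (OX ⟶ E) →+ HPp) (ρ₁ : HPp →ₗ[k] Hp)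
    (δ₂ : (E ⟶ OX) →+ HPq) (ρ₂ : HPq →ₗ[k] Hq)
    (φ₂ : Hp →ₗ[k] Hq →ₗ[k] k)
    (hperfect : ∀ x : Hp, x ≠ 0 → ∃ y : Hq, φ₂ x y ≠ 0)
    (hcomm : ∀ (s : OX ⟶ E) (t : E ⟶ OX),
      s ≫ t = 0 → φ₂ (ρ₁ (δ₁ s)) (ρ₂ (δ₂ t)) = 0)
    (hδ₁ : Function.Injective δ₁) (hρ₁ : Function.Injective ρ₁)
    (hδ₂ : Function.Surjective δ₂) (hρ₂ : Function.Surjective ρ₂) :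
    (∃ (s : OX ⟶ E) (t : E ⟶ OX), s ≫ t ≠ 0) ∧
      ∃ E' : C, Nonempty (E ≅ E' ⊞ OX) := by
  obtain ⟨s, hs⟩ := h0
  have hδs : δ₁ s ≠ 0 := fun h => hs (hδ₁ (by rw [h, map_zero]))
  have hρs : ρ₁ (δ₁ s) ≠ 0 := fun h => hδs (hρ₁ (by rw [h, map_zero]))
  obtain ⟨y, hy⟩ := hperfect _ hρs
  obtain ⟨z, hz⟩ := hρ₂ y
  obtain ⟨t, ht⟩ := hδ₂ z
  have hst : s ≫ t ≠ 0 := by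
    intro h
    exact hy (by rw [← hz, ← ht]; exact hcomm s t h)
  refine ⟨⟨s, t, hst⟩, ?_⟩
  haveI : IsIso (s ≫ t) := hOX _ hst
  haveI : IsSplitMono s := ⟨⟨⟨t ≫ inv (s ≫ t), by rw [← Category.assoc, IsIso.hom_inv_id]⟩⟩⟩
  exact ⟨cokernel s, ⟨(biprod.uniqueUpToIso OX (cokernel s)
    (isBilimitBinaryBiconeOfIsSplitMonoOfCokernel (cokernelIsCokernel s))) ≪≫
    biprod.braiding _ _⟩⟩
end
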